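/- For p ∈ (-∞,-1] ∪ [0,∞), the inequality sin t / t < (2p + (p+3)cos t)/((3p+1) + 2cos t) holds for all t ∈ (0, π/2) if and only if p ∈ (-∞,-1] ∪ [9,∞). -/
import Mathlib

lemma pos_aux (f f' : ℝ → ℝ) (hf : ∀ x, HasDerivAt f (f' x) x) (h0 : f 0 = 0)
    (hd : ∀ x, 0 < x → 0 ≤ f' x) {x : ℝ} (hx : 0 ≤ x) : 0 ≤ f x := by
  have hm : MonotoneOn f (Set.Ici 0) := by
    apply monotoneOn_of_deriv_nonneg (convex_Ici 0)
      (fun y _ => (hf y).continuousAt.continuousWithinAt)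
    · intro y _; exact (hf y).differentiableAt.differentiableWithinAt
    · intro y hy
      rw [interior_Ici] at hy
      rw [(hf y).deriv]; exact hd y hy
  have := hm Set.self_mem_Ici hx hx
  rwa [h0] at this

lemma cos_lb1 (x : ℝ) : 1 - x^2/2 ≤ Real.cos x :=
  Real.one_sub_sq_div_two_le_cos

lemma sin_lb1 (x : ℝ) (hx : 0 ≤ x) : x - x^3/6 ≤ Real.sin x := by
  have h := pos_aux (fun x => Real.sin x - (x - x^3/6)) (fun x => Real.cos x - (1 - x^2/2))
    (fun x => by
      have : HasDerivAt (fun x : ℝ => Real.sin x - (x - x^3/6))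
          (Real.cos x - (1 - (3:ℕ)*x^(3-1)/6)) x :=
        (Real.hasDerivAt_sin x).sub ((hasDerivAt_id x).sub ((hasDerivAt_pow 3 x).div_const 6))
      convert this using 1; norm_num; ring)
    (by norm_num) (fun y _ => by have := cos_lb1 y; linarith) hx
  linarith [h]

lemma cos_ub2 (x : ℝ) (hx : 0 ≤ x) : Real.cos x ≤ 1 - x^2/2 + x^4/24 := by
  have h := pos_aux (fun x => 1 - x^2/2 + x^4/24 - Real.cos x)
    (fun x => Real.sin x - (x - x^3/6))
    (fun x => by
      have : HasDerivAt (fun x : ℝ => 1 - x^2/2 + x^4/24 - Real.cos x)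
          (0 - (2:ℕ)*x^(2-1)/2 + (4:ℕ)*x^(4-1)/24 - (-Real.sin x)) x :=
        (((hasDerivAt_const x (1:ℝ)).sub ((hasDerivAt_pow 2 x).div_const 2)).add
          ((hasDerivAt_pow 4 x).div_const 24)).sub (Real.hasDerivAt_cos x)
      convert this using 1; norm_num; ring)
    (by norm_num) (fun y hy => by have := sin_lb1 y hy.le; linarith) hx
  linarith [h]

lemma sin_ub2 (x : ℝ) (hx : 0 ≤ x) : Real.sin x ≤ x - x^3/6 + x^5/120 := by
  have h := pos_aux (fun x => x - x^3/6 + x^5/120 - Real.sin x)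
    (fun x => (1 - x^2/2 + x^4/24) - Real.cos x)
    (fun x => by
      have : HasDerivAt (fun x : ℝ => x - x^3/6 + x^5/120 - Real.sin x)
          (1 - (3:ℕ)*x^(3-1)/6 + (5:ℕ)*x^(5-1)/120 - Real.cos x) x :=
        (((hasDerivAt_id x).sub ((hasDerivAt_pow 3 x).div_const 6)).add
          ((hasDerivAt_pow 5 x).div_const 120)).sub (Real.hasDerivAt_sin x)
      convert this using 1; norm_num; ring)
    (by norm_num) (fun y hy => by have := cos_ub2 y hy.le; linarith) hx
  linarith [h]

lemma cos_lb2 (x : ℝ) (hx : 0 ≤ x) : 1 - x^2/2 + x^4/24 - x^6/720 ≤ Real.cos x := by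
  have h := pos_aux (fun x => Real.cos x - (1 - x^2/2 + x^4/24 - x^6/720))
    (fun x => (x - x^3/6 + x^5/120) - Real.sin x)
    (fun x => by
      have : HasDerivAt (fun x : ℝ => Real.cos x - (1 - x^2/2 + x^4/24 - x^6/720))
          (-Real.sin x - (0 - (2:ℕ)*x^(2-1)/2 + (4:ℕ)*x^(4-1)/24 - (6:ℕ)*x^(6-1)/720)) x :=
        (Real.hasDerivAt_cos x).sub ((((hasDerivAt_const x (1:ℝ)).sub
          ((hasDerivAt_pow 2 x).div_const 2)).add ((hasDerivAt_pow 4 x).div_const 24)).sub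
          ((hasDerivAt_pow 6 x).div_const 720))
      convert this using 1; norm_num; ring)
    (by norm_num) (fun y hy => by have := sin_ub2 y hy.le; linarith) hx
  linarith [h]

lemma sin_lb2 (x : ℝ) (hx : 0 ≤ x) : x - x^3/6 + x^5/120 - x^7/5040 ≤ Real.sin x := by
  have h := pos_aux (fun x => Real.sin x - (x - x^3/6 + x^5/120 - x^7/5040))
    (fun x => Real.cos x - (1 - x^2/2 + x^4/24 - x^6/720))
    (fun x => by
      have : HasDerivAt (fun x : ℝ => Real.sin x - (x - x^3/6 + x^5/120 - x^7/5040))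
          (Real.cos x - (1 - (3:ℕ)*x^(3-1)/6 + (5:ℕ)*x^(5-1)/120 - (7:ℕ)*x^(7-1)/5040)) x :=
        (Real.hasDerivAt_sin x).sub ((((hasDerivAt_id x).sub
          ((hasDerivAt_pow 3 x).div_const 6)).add ((hasDerivAt_pow 5 x).div_const 120)).sub
          ((hasDerivAt_pow 7 x).div_const 5040))
      convert this using 1; norm_num; ring)
    (by norm_num) (fun y hy => by have := cos_lb2 y hy.le; linarith) hx
  linarith [h]

lemma cos_ub3 (x : ℝ) (hx : 0 ≤ x) :
    Real.cos x ≤ 1 - x^2/2 + x^4/24 - x^6/720 + x^8/40320 := by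
  have h := pos_aux (fun x => 1 - x^2/2 + x^4/24 - x^6/720 + x^8/40320 - Real.cos x)
    (fun x => Real.sin x - (x - x^3/6 + x^5/120 - x^7/5040))
    (fun x => by
      have : HasDerivAt
          (fun x : ℝ => 1 - x^2/2 + x^4/24 - x^6/720 + x^8/40320 - Real.cos x)
          (0 - (2:ℕ)*x^(2-1)/2 + (4:ℕ)*x^(4-1)/24 - (6:ℕ)*x^(6-1)/720 + (8:ℕ)*x^(8-1)/40320
            - (-Real.sin x)) x :=
        (((((hasDerivAt_const x (1:ℝ)).sub ((hasDerivAt_pow 2 x).div_const 2)).add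
          ((hasDerivAt_pow 4 x).div_const 24)).sub ((hasDerivAt_pow 6 x).div_const 720)).add
          ((hasDerivAt_pow 8 x).div_const 40320)).sub (Real.hasDerivAt_cos x)
      convert this using 1; norm_num; ring)
    (by norm_num) (fun y hy => by have := sin_lb2 y hy.le; linarith) hx
  linarith [h]

lemma sin_ub3 (x : ℝ) (hx : 0 ≤ x) :
    Real.sin x ≤ x - x^3/6 + x^5/120 - x^7/5040 + x^9/362880 := by
  have h := pos_aux (fun x => x - x^3/6 + x^5/120 - x^7/5040 + x^9/362880 - Real.sin x)
    (fun x => (1 - x^2/2 + x^4/24 - x^6/720 + x^8/40320) - Real.cos x)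
    (fun x => by
      have : HasDerivAt
          (fun x : ℝ => x - x^3/6 + x^5/120 - x^7/5040 + x^9/362880 - Real.sin x)
          (1 - (3:ℕ)*x^(3-1)/6 + (5:ℕ)*x^(5-1)/120 - (7:ℕ)*x^(7-1)/5040 + (9:ℕ)*x^(9-1)/362880
            - Real.cos x) x :=
        (((((hasDerivAt_id x).sub ((hasDerivAt_pow 3 x).div_const 6)).add
          ((hasDerivAt_pow 5 x).div_const 120)).sub ((hasDerivAt_pow 7 x).div_const 5040)).add
          ((hasDerivAt_pow 9 x).div_const 362880)).sub (Real.hasDerivAt_sin x)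
      convert this using 1; norm_num; ring)
    (by norm_num) (fun y hy => by have := cos_ub3 y hy.le; linarith) hx
  linarith [h]
lemma A_pos (t : ℝ) (ht : 0 < t) (ht2 : t^2 < 3) :
    0 < 2*t + t*Real.cos t - 3*Real.sin t := by
  have h1 := mul_le_mul_of_nonneg_left (cos_lb2 t ht.le) ht.le
  have h2 := sin_ub2 t ht.le
  nlinarith [mul_pos (pow_pos ht 5) (show (0:ℝ) < 12 - t^2 by linarith)]

lemma F_pos (t : ℝ) (ht : 0 < t) (ht2 : t^2 < 3) :
    0 < 18*t + 12*(t*Real.cos t) - 28*Real.sin t - 2*(Real.sin t * Real.cos t) := by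
  have h1 := mul_le_mul_of_nonneg_left (cos_lb2 t ht.le) ht.le
  have h2 := sin_ub3 t ht.le
  have h3 := sin_ub3 (2*t) (by linarith)
  rw [Real.sin_two_mul] at h3
  nlinarith [mul_pos (pow_pos ht 7) (show (0:ℝ) < 48/5 - t^2 by linarith)]

theorem stmt6 (p : ℝ) (hp : p ≤ -1 ∨ 0 ≤ p) :
    (∀ t ∈ Set.Ioo 0 (Real.pi/2),
      Real.sin t / t < (2*p + (p+3)*Real.cos t) / ((3*p+1) + 2*Real.cos t)) ↔
    (p ≤ -1 ∨ 9 ≤ p) := by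
  constructor
  · intro H
    rcases hp with h | h
    · exact Or.inl h
    right
    by_contra h9
    push_neg at h9
    have h9p : 0 < 9 - p := by linarith
    set t := Real.sqrt (9 - p) / 4 with hts
    have ht : 0 < t := by positivity
    have ht2 : t^2 = (9-p)/16 := by
      rw [hts, div_pow, Real.sq_sqrt h9p.le]; norm_num
    have htle : t ≤ 3/4 := by
      nlinarith [ht.le, ht2]
    have htlt : t < Real.pi/2 := by
      have := Real.pi_gt_three; linarith
    have key := H t ⟨ht, htlt⟩
    have hc_pos : 0 < Real.cos t :=
      Real.cos_pos_of_mem_Ioo ⟨by nlinarith [Real.pi_gt_three], htlt⟩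
    have hden : 0 < (3*p+1) + 2*Real.cos t := by linarith
    rw [div_lt_div_iff₀ ht hden] at key
    -- upper bounds on A and B
    have hc_ub := cos_ub2 t ht.le
    have hs_lb := sin_lb2 t ht.le
    have hs2_lb := sin_lb2 (2*t) (by linarith)
    rw [Real.sin_two_mul] at hs2_lb
    have hAub : 2*t + t*Real.cos t - 3*Real.sin t ≤ t^5/60 + t^7/1680 := by
      nlinarith [mul_le_mul_of_nonneg_left hc_ub ht.le]
    have hBub : 3*(t*Real.cos t) - Real.sin t - 2*(Real.sin t * Real.cos t)
        ≤ -(3*t^5/20) + 129*t^7/5040 := by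
      nlinarith [mul_le_mul_of_nonneg_left hc_ub ht.le]
    have e1 : p*(2*t + t*Real.cos t - 3*Real.sin t)
        + (3*(t*Real.cos t) - Real.sin t - 2*(Real.sin t * Real.cos t))
        ≤ (p-9)*t^5/60 + (3*p+129)*t^7/5040 := by
      nlinarith [mul_le_mul_of_nonneg_left hAub h]
    have e2 : t^7 = t^5 * ((9-p)/16) := by
      rw [← ht2]; ring
    have e3 : (p-9)*t^5/60 + (3*p+129)*t^7/5040 < 0 := by
      rw [e2]
      nlinarith [mul_pos (mul_pos (pow_pos ht 5) h9p)
        (show (0:ℝ) < 1215 - 3*p by linarith)]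
    nlinarith [key, e1, e3]
  · intro hP t htmem
    obtain ⟨ht, htlt⟩ := htmem
    have ht2 : t^2 < 3 := by
      nlinarith [Real.pi_lt_d2, ht]
    have hA := A_pos t ht ht2
    rcases hP with h | h
    · -- p ≤ -1 : denominator negative
      have hc1 : Real.cos t < 1 := by
        nlinarith [cos_ub2 t ht.le]
      have hden : (3*p+1) + 2*Real.cos t < 0 := by linarith
      have hslt : Real.sin t < t := Real.sin_lt ht
      rw [show (2*p + (p+3)*Real.cos t) / ((3*p+1) + 2*Real.cos t)
          = (-(2*p + (p+3)*Real.cos t)) / (-((3*p+1) + 2*Real.cos t)) by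
        rw [neg_div_neg_eq]]
      rw [div_lt_div_iff₀ ht (by linarith)]
      nlinarith [mul_nonneg (show (0:ℝ) ≤ -(p+1) by linarith) hA.le,
        mul_pos (show (0:ℝ) < 1 - Real.cos t by linarith)
          (show (0:ℝ) < t - Real.sin t by linarith)]
    · -- 9 ≤ p
      have hF := F_pos t ht ht2
      have hc_pos : 0 < Real.cos t :=
        Real.cos_pos_of_mem_Ioo ⟨by nlinarith [Real.pi_gt_three], htlt⟩
      have hden : 0 < (3*p+1) + 2*Real.cos t := by linarith
      rw [div_lt_div_iff₀ ht hden]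
      nlinarith [mul_nonneg (show (0:ℝ) ≤ p - 9 by linarith) hA.le, hF]
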